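/- arXiv:1511.06454 — 4 statements merged into one kernel-verified Lean document; each statement's English description precedes it below -/
import Mathlib

section
/- Let X be a mixture set, T ≥ 1, n ≥ T + 1 a finite integer, and ≽ a binary relation on X^n. If (u, β, δ) and (u′, β′, δ′) both provide SH(T) discounted expected utility representations for ≽ on X^n, then there exist A > 0 and B ∈ ℝ with u = Au′ + B, δ = δ′, and β_t = β′_t for all t = 1,…,T−1. -/
/-- A mixture set: a set `X` with an operation `mix x l y` (written `xλy` in the paper),
satisfying the Herstein–Milnor axioms for `l, m ∈ [0,1]`. -/
structure MixtureSpace (X : Type*) where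
  mix : X → ℝ → X → X
  mix_one : ∀ x y : X, mix x 1 y = x
  mix_comm : ∀ (x y : X), ∀ l ∈ Set.Icc (0:ℝ) 1, mix x l y = mix y (1 - l) x
  mix_assoc : ∀ (x y : X), ∀ l ∈ Set.Icc (0:ℝ) 1, ∀ m ∈ Set.Icc (0:ℝ) 1,
    mix (mix x m y) l y = mix x (l * m) y

/-- `u : X → ℝ` is mixture linear. -/
def MixtureSpace.linear {X : Type*} (M : MixtureSpace X) (u : X → ℝ) : Prop :=
  ∀ (x y : X), ∀ l ∈ Set.Icc (0:ℝ) 1, u (M.mix x l y) = l * u x + (1 - l) * u y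

/-- Strict (asymmetric) part of a relation. -/
def strictP {α : Type*} (R : α → α → Prop) (x y : α) : Prop := R x y ∧ ¬ R y x

/-- Componentwise mixture of finite streams. -/
def mixStream {X : Type*} (M : MixtureSpace X) {n : ℕ} (x : Fin n → X) (l : ℝ)
    (y : Fin n → X) : Fin n → X := fun t => M.mix (x t) l (y t)

/-- Componentwise mixture of infinite streams. -/
def mixSeq {X : Type*} (M : MixtureSpace X) (x : ℕ → X) (l : ℝ) (y : ℕ → X) :
    ℕ → X := fun t => M.mix (x t) l (y t)

/-! ### Finite-horizon axioms -/

/-- F1: weak order (complete and transitive). -/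
def AxF1 {X : Type*} {n : ℕ} (R : (Fin n → X) → (Fin n → X) → Prop) : Prop :=
  (∀ x y, R x y ∨ R y x) ∧ Transitive R

/-- F2: non-triviality (a ≻ b for some a, b in the induced relation). -/
def AxF2 {X : Type*} {n : ℕ} (R : (Fin n → X) → (Fin n → X) → Prop) : Prop :=
  ∃ a b : X, strictP R (fun _ => a) (fun _ => b)

/-- F3: mixture independence. -/
def AxF3 {X : Type*} (M : MixtureSpace X) {n : ℕ}
    (R : (Fin n → X) → (Fin n → X) → Prop) : Prop :=
  ∀ x y z : Fin n → X, ∀ l ∈ Set.Ioo (0:ℝ) 1,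
    (R x y ↔ R (mixStream M x l z) (mixStream M y l z))

/-- F4: mixture continuity. -/
def AxF4 {X : Type*} (M : MixtureSpace X) {n : ℕ}
    (R : (Fin n → X) → (Fin n → X) → Prop) : Prop :=
  ∀ x y z : Fin n → X,
    IsClosed {l : ℝ | l ∈ Set.Icc (0:ℝ) 1 ∧ R (mixStream M x l z) y} ∧
    IsClosed {l : ℝ | l ∈ Set.Icc (0:ℝ) 1 ∧ R y (mixStream M x l z)}

/-- F5: monotonicity. -/
def AxF5 {X : Type*} {n : ℕ} (R : (Fin n → X) → (Fin n → X) → Prop) : Prop :=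
  ∀ x y : Fin n → X, (∀ t, R (fun _ => x t) (fun _ => y t)) → R x y

/-- `(u, w)` provides an AA representation for `R` on `X^n`. -/
def AARep {X : Type*} (M : MixtureSpace X) {n : ℕ}
    (R : (Fin n → X) → (Fin n → X) → Prop) (u : X → ℝ) (w : Fin n → ℝ) : Prop :=
  M.linear u ∧ (∃ a b : X, u a ≠ u b) ∧ (∀ t, 0 ≤ w t) ∧ (∃ t, 0 < w t) ∧
  ∀ x y : Fin n → X, (R x y ↔ (∑ t, w t * u (x t)) ≥ ∑ t, w t * u (y t))

/-! ### Infinite-horizon notions -/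

/-- Ultimately constant stream (equals `x0` from some period on). -/
def UltConst {X : Type*} (x0 : X) (x : ℕ → X) : Prop := ∃ T, ∀ t, T ≤ t → x t = x0

/-- Member of `X**`: ultimately constant or constant. -/
def InXSS {X : Type*} (x0 : X) (x : ℕ → X) : Prop :=
  UltConst x0 x ∨ ∃ a, ∀ t, x t = a

/-- `[a]_k`: the stream with `a` in period `k` and `x0` elsewhere. -/
def bracket {X : Type*} (x0 : X) (a : X) (k : ℕ) : ℕ → X :=
  fun t => if t = k then a else x0

/-- `(x₁, …, x_{k−1}, a, x_{k+1}, …, x_T, x0, x0, …)`. -/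
def truncMod {X : Type*} (x0 : X) (x : ℕ → X) (k : ℕ) (a : X) (T : ℕ) : ℕ → X :=
  fun t => if t = k then a else if t ≤ T then x t else x0

/-- I1: weak order. -/
def AxI1 {X : Type*} (R : (ℕ → X) → (ℕ → X) → Prop) : Prop :=
  (∀ x y, R x y ∨ R y x) ∧ Transitive R

/-- I2: non-triviality `a ≻ x0 ≻ b` in the induced relation. -/
def AxI2 {X : Type*} (x0 : X) (R : (ℕ → X) → (ℕ → X) → Prop) : Prop :=
  ∃ a b : X, strictP R (fun _ => a) (fun _ => x0) ∧ strictP R (fun _ => x0) (fun _ => b)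

/-- I3: mixture independence on `X**`. -/
def AxI3 {X : Type*} (M : MixtureSpace X) (x0 : X)
    (R : (ℕ → X) → (ℕ → X) → Prop) : Prop :=
  ∀ x y z : ℕ → X, InXSS x0 x → InXSS x0 y → InXSS x0 z →
    ∀ l ∈ Set.Ioo (0:ℝ) 1, (R x y ↔ R (mixSeq M x l z) (mixSeq M y l z))

/-- I4: mixture continuity. -/
def AxI4 {X : Type*} (M : MixtureSpace X) (x0 : X)
    (R : (ℕ → X) → (ℕ → X) → Prop) : Prop :=
  ∀ x z : ℕ → X, InXSS x0 x → InXSS x0 z → ∀ y : ℕ → X,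
    IsClosed {l : ℝ | l ∈ Set.Icc (0:ℝ) 1 ∧ R (mixSeq M x l z) y} ∧
    IsClosed {l : ℝ | l ∈ Set.Icc (0:ℝ) 1 ∧ R y (mixSeq M x l z)}

/-- I5: monotonicity. -/
def AxI5 {X : Type*} (R : (ℕ → X) → (ℕ → X) → Prop) : Prop :=
  ∀ x y : ℕ → X, (∀ t, R (fun _ => x t) (fun _ => y t)) → R x y

/-- I6: convergence. -/
def AxI6 {X : Type*} (x0 : X) (R : (ℕ → X) → (ℕ → X) → Prop) : Prop :=
  ∀ (x : ℕ → X) (a : X) (k : ℕ),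
    (strictP R (bracket x0 a k) (bracket x0 (x k) k) →
      ∃ Tp, k ≤ Tp ∧ ∀ T, Tp ≤ T → R (truncMod x0 x k a T) x) ∧
    (strictP R (bracket x0 (x k) k) (bracket x0 a k) →
      ∃ Tm, k ≤ Tm ∧ ∀ T, Tm ≤ T → R x (truncMod x0 x k a T))

/-- `(u, w)` provides an AA representation for `R` on `X^∞` (with its
discounted-utility series converging for every stream). -/
def AARepInf {X : Type*} (M : MixtureSpace X)
    (R : (ℕ → X) → (ℕ → X) → Prop) (u : X → ℝ) (w : ℕ → ℝ) : Prop :=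
  M.linear u ∧ (∃ a b : X, u a ≠ u b) ∧ (∀ t, 0 ≤ w t) ∧ (∃ t, 0 < w t) ∧
  ∃ U : (ℕ → X) → ℝ,
    (∀ x : ℕ → X, Filter.Tendsto (fun N => ∑ t ∈ Finset.range N, w t * u (x t))
      Filter.atTop (nhds (U x))) ∧
    ∀ x y : ℕ → X, (R x y ↔ U x ≥ U y)

/-! ### Exponential discounting -/

/-- F2′: essentiality of period 1. -/
def AxF2' {X : Type*} {n : ℕ} (R : (Fin n → X) → (Fin n → X) → Prop)
    (h0 : 0 < n) : Prop :=
  ∃ (a b : X) (x : Fin n → X),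
    strictP R (Function.update x ⟨0, h0⟩ a) (Function.update x ⟨0, h0⟩ b)

/-- F6: impatience. -/
def AxF6 {X : Type*} {n : ℕ} (R : (Fin n → X) → (Fin n → X) → Prop)
    (h0 : 0 < n) (h1 : 1 < n) : Prop :=
  ∀ a b : X, strictP R (fun _ => a) (fun _ => b) →
    ∀ x : Fin n → X,
      strictP R (Function.update (Function.update x ⟨0, h0⟩ a) ⟨1, h1⟩ b)
               (Function.update (Function.update x ⟨0, h0⟩ b) ⟨1, h1⟩ a)

/-- `(x₂, …, xₙ, a)`. -/
def shiftApp {X : Type*} {n : ℕ} (x : Fin n → X) (a : X) : Fin n → X :=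
  fun t => if h : (t : ℕ) + 1 < n then x ⟨(t : ℕ) + 1, h⟩ else a

/-- F7: stationarity. -/
def AxF7 {X : Type*} {n : ℕ} (R : (Fin n → X) → (Fin n → X) → Prop)
    (h0 : 0 < n) : Prop :=
  ∀ (a : X) (x y : Fin n → X),
    (R (Function.update x ⟨0, h0⟩ a) (Function.update y ⟨0, h0⟩ a) ↔
     R (shiftApp x a) (shiftApp y a))

/-- `(u, δ)` provides an exponentially discounted expected utility representation. -/
def ExpRep {X : Type*} (M : MixtureSpace X) {n : ℕ}
    (R : (Fin n → X) → (Fin n → X) → Prop) (u : X → ℝ) (δ : ℝ) : Prop :=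
  M.linear u ∧ (∃ a b : X, u a ≠ u b) ∧ δ ∈ Set.Ioo (0:ℝ) 1 ∧
  ∀ x y : Fin n → X,
    (R x y ↔ (∑ t : Fin n, δ ^ (t : ℕ) * u (x t)) ≥ ∑ t : Fin n, δ ^ (t : ℕ) * u (y t))

/-- I2′: essentiality of period 1 (infinite horizon). -/
def AxI2' {X : Type*} (x0 : X) (R : (ℕ → X) → (ℕ → X) → Prop) : Prop :=
  ∃ a b : X, strictP R (bracket x0 a 0) (fun _ => x0) ∧
    strictP R (fun _ => x0) (bracket x0 b 0)

/-- `(a, x₁, x₂, …)`. -/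
def consSeq {X : Type*} (a : X) (x : ℕ → X) : ℕ → X :=
  fun t => if t = 0 then a else x (t - 1)

/-- I7: stationarity (infinite horizon). -/
def AxI7 {X : Type*} (R : (ℕ → X) → (ℕ → X) → Prop) : Prop :=
  ∀ (a : X) (x y : ℕ → X), (R (consSeq a x) (consSeq a y) ↔ R x y)

/-- `(u, δ)` provides an exponentially discounted expected utility representation
on `X^∞`, with converging series. -/
def ExpRepInf {X : Type*} (M : MixtureSpace X)
    (R : (ℕ → X) → (ℕ → X) → Prop) (u : X → ℝ) (δ : ℝ) : Prop :=
  M.linear u ∧ (∃ a b : X, u a ≠ u b) ∧ δ ∈ Set.Ioo (0:ℝ) 1 ∧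
  ∃ U : (ℕ → X) → ℝ,
    (∀ x : ℕ → X, Filter.Tendsto (fun N => ∑ t ∈ Finset.range N, δ ^ t * u (x t))
      Filter.atTop (nhds (U x))) ∧
    ∀ x y : ℕ → X, (R x y ↔ U x ≥ U y)

/-! ### Semi-hyperbolic discounting -/

/-- The SH(T) discount function at (1-based) period `t`:
`D 1 = 1`, `D t = β₁⋯β_{t−1} δ^{t−1}` for `2 ≤ t ≤ T`,
`D t = β₁⋯β_{T−1} δ^{t−1}` for `t > T`. -/
noncomputable def SHD (T : ℕ) (β : ℕ → ℝ) (δ : ℝ) (t : ℕ) : ℝ :=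
  (∏ i ∈ Finset.Icc 1 (min t T - 1), β i) * δ ^ (t - 1)

/-- Parameter restrictions: `0 < β₁ ≤ … ≤ β_{T−1} ≤ 1` and `δ ∈ (0,1)`. -/
def SHParams (T : ℕ) (β : ℕ → ℝ) (δ : ℝ) : Prop :=
  (∀ i : ℕ, 1 ≤ i → i ≤ T - 1 → 0 < β i ∧ β i ≤ 1) ∧
  (∀ i : ℕ, 1 ≤ i → i + 1 ≤ T - 1 → β i ≤ β (i + 1)) ∧
  δ ∈ Set.Ioo (0:ℝ) 1

/-- `(u, β, δ)` provides an SH(T) discounted expected utility representation on `X^n`. -/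
def SHRep {X : Type*} (M : MixtureSpace X) {n : ℕ}
    (R : (Fin n → X) → (Fin n → X) → Prop)
    (T : ℕ) (β : ℕ → ℝ) (δ : ℝ) (u : X → ℝ) : Prop :=
  M.linear u ∧ (∃ a b : X, u a ≠ u b) ∧ SHParams T β δ ∧
  ∀ x y : Fin n → X,
    (R x y ↔ (∑ s : Fin n, SHD T β δ ((s : ℕ) + 1) * u (x s)) ≥
      ∑ s : Fin n, SHD T β δ ((s : ℕ) + 1) * u (y s))

/-- F2″: essentiality of (1-based) periods `1, …, T`. -/
def AxF2'' {X : Type*} {n : ℕ} (R : (Fin n → X) → (Fin n → X) → Prop)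
    (T : ℕ) (hTn : T ≤ n) : Prop :=
  ∃ (a b : X) (x : Fin n → X), ∀ i : ℕ, ∀ hi : i < T,
    strictP R (Function.update x ⟨i, lt_of_lt_of_le hi hTn⟩ a)
             (Function.update x ⟨i, lt_of_lt_of_le hi hTn⟩ b)

/-- F6′: impatience between (1-based) periods `T` and `T+1`. -/
def AxF6' {X : Type*} {n : ℕ} (R : (Fin n → X) → (Fin n → X) → Prop)
    (T : ℕ) (h1 : T - 1 < n) (h2 : T < n) : Prop :=
  ∀ a b : X, strictP R (fun _ => a) (fun _ => b) →
    ∀ x : Fin n → X,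
      strictP R (Function.update (Function.update x ⟨T-1, h1⟩ a) ⟨T, h2⟩ b)
               (Function.update (Function.update x ⟨T-1, h1⟩ b) ⟨T, h2⟩ a)

/-- Delete (0-based) coordinate `i`, shift the rest left, and append `a` at the end. -/
def delIns {X : Type*} {n : ℕ} (x : Fin n → X) (i : ℕ) (a : X) : Fin n → X :=
  fun s => if (s : ℕ) < i then x s
    else if h : (s : ℕ) + 1 < n then x ⟨(s : ℕ) + 1, h⟩ else a

/-- F7′: stationarity from (1-based) period `T`. -/
def AxF7' {X : Type*} {n : ℕ} (R : (Fin n → X) → (Fin n → X) → Prop)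
    (T : ℕ) (h1 : T - 1 < n) : Prop :=
  ∀ (a : X) (x y : Fin n → X), (∀ s : Fin n, (s : ℕ) < T - 1 → x s = y s) →
    (R (Function.update x ⟨T-1, h1⟩ a) (Function.update y ⟨T-1, h1⟩ a) ↔
     R (delIns x (T-1) a) (delIns y (T-1) a))

/-- `(x₁, …, x_{t−2}, a, b, x_{t+2}, …, xₙ, x_{t−1})` where `i` is the 0-based
index of period `t` (so `i = t − 1`). -/
def ebShiftFin {X : Type*} {n : ℕ} (x : Fin n → X) (i : ℕ) (hi : i - 1 < n)
    (a b : X) : Fin n → X :=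
  fun s => if (s : ℕ) < i - 1 then x s
    else if (s : ℕ) = i - 1 then a
    else if (s : ℕ) = i then b
    else if h : (s : ℕ) + 1 < n then x ⟨(s : ℕ) + 1, h⟩
    else x ⟨i - 1, hi⟩

/-- F8: early bias. -/
def AxF8 {X : Type*} {n : ℕ} (R : (Fin n → X) → (Fin n → X) → Prop)
    (T : ℕ) (hTn : T < n) : Prop :=
  ∀ a b c d : X,
    strictP R (fun _ => a) (fun _ => c) → strictP R (fun _ => d) (fun _ => b) →
    ∀ x : Fin n → X, ∀ i : ℕ, ∀ hi1 : 1 ≤ i, ∀ hi2 : i ≤ T - 1,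
      (R (Function.update (Function.update x ⟨i, by omega⟩ a) ⟨i+1, by omega⟩ b)
         (Function.update (Function.update x ⟨i, by omega⟩ c) ⟨i+1, by omega⟩ d) ∧
       R (Function.update (Function.update x ⟨i, by omega⟩ c) ⟨i+1, by omega⟩ d)
         (Function.update (Function.update x ⟨i, by omega⟩ a) ⟨i+1, by omega⟩ b)) →
      R (ebShiftFin x i (by omega) a b) (ebShiftFin x i (by omega) c d)

/-- `(u, β, δ)` provides an SH(T) discounted expected utility representation on `X^∞`. -/
def SHRepInf {X : Type*} (M : MixtureSpace X)
    (R : (ℕ → X) → (ℕ → X) → Prop)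
    (T : ℕ) (β : ℕ → ℝ) (δ : ℝ) (u : X → ℝ) : Prop :=
  M.linear u ∧ (∃ a b : X, u a ≠ u b) ∧ SHParams T β δ ∧
  ∃ U : (ℕ → X) → ℝ,
    (∀ x : ℕ → X, Filter.Tendsto
      (fun N => ∑ t ∈ Finset.range N, SHD T β δ (t + 1) * u (x t))
      Filter.atTop (nhds (U x))) ∧
    ∀ x y : ℕ → X, (R x y ↔ U x ≥ U y)

/-- I2″: essentiality of (1-based) periods `1, …, T`. -/
def AxI2'' {X : Type*} (x0 : X) (R : (ℕ → X) → (ℕ → X) → Prop) (T : ℕ) : Prop :=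
  ∃ a b : X, ∀ t : ℕ, t < T →
    strictP R (bracket x0 a t) (fun _ => x0) ∧ strictP R (fun _ => x0) (bracket x0 b t)

/-- Delete (0-based) coordinate `i` of an infinite stream. -/
def delSeq {X : Type*} (x : ℕ → X) (i : ℕ) : ℕ → X :=
  fun t => if t < i then x t else x (t + 1)

/-- I7′: stationarity from (1-based) period `T`. -/
def AxI7' {X : Type*} (R : (ℕ → X) → (ℕ → X) → Prop) (T : ℕ) : Prop :=
  ∀ (a : X) (x y : ℕ → X), (∀ t, t < T - 1 → x t = y t) →
    (R (Function.update x (T-1) a) (Function.update y (T-1) a) ↔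
     R (delSeq x (T-1)) (delSeq y (T-1)))

/-- `(x₁, …, x_{t−2}, a, b, x_{t+2}, …)` where `i = t − 1` (0-based index of period `t`). -/
def ebShiftSeq {X : Type*} (x : ℕ → X) (i : ℕ) (a b : X) : ℕ → X :=
  fun s => if s < i - 1 then x s
    else if s = i - 1 then a
    else if s = i then b
    else x (s + 1)

/-- I8: early bias (infinite horizon). -/
def AxI8 {X : Type*} (R : (ℕ → X) → (ℕ → X) → Prop) (T : ℕ) : Prop :=
  ∀ a b c d : X,
    strictP R (fun _ => a) (fun _ => c) → strictP R (fun _ => d) (fun _ => b) →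
    ∀ x : ℕ → X, ∀ i : ℕ, 1 ≤ i → i ≤ T - 1 →
      (R (Function.update (Function.update x i a) (i+1) b)
         (Function.update (Function.update x i c) (i+1) d) ∧
       R (Function.update (Function.update x i c) (i+1) d)
         (Function.update (Function.update x i a) (i+1) b)) →
      R (ebShiftSeq x i a b) (ebShiftSeq x i c d)


lemma SHD_one (T : ℕ) (hT : 1 ≤ T) (β : ℕ → ℝ) (δ : ℝ) : SHD T β δ 1 = 1 := by
  unfold SHD
  rw [min_eq_left hT]
  simp

lemma SHD_pos (T : ℕ) (β : ℕ → ℝ) (δ : ℝ) (hp : SHParams T β δ) (t : ℕ) :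
    0 < SHD T β δ t := by
  obtain ⟨h1, -, h3⟩ := hp
  unfold SHD
  apply mul_pos
  · apply Finset.prod_pos
    intro i hi
    rw [Finset.mem_Icc] at hi
    exact (h1 i hi.1 (by have := Nat.min_le_right t T; omega)).1
  · exact pow_pos h3.1 _

lemma SHD_le_one (T : ℕ) (β : ℕ → ℝ) (δ : ℝ) (hp : SHParams T β δ) (t : ℕ) :
    SHD T β δ t ≤ 1 := by
  obtain ⟨h1, -, h3⟩ := hp
  unfold SHD
  have hb : ∀ i ∈ Finset.Icc 1 (min t T - 1), 0 < β i := by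
    intro i hi
    rw [Finset.mem_Icc] at hi
    exact (h1 i hi.1 (by have := Nat.min_le_right t T; omega)).1
  have hprod1 : ∏ i ∈ Finset.Icc 1 (min t T - 1), β i ≤ 1 := by
    apply Finset.prod_le_one
    · intro i hi; exact (hb i hi).le
    · intro i hi
      rw [Finset.mem_Icc] at hi
      exact (h1 i hi.1 (by have := Nat.min_le_right t T; omega)).2
  have hprod0 : 0 < ∏ i ∈ Finset.Icc 1 (min t T - 1), β i := Finset.prod_pos hb
  have hpow1 : δ ^ (t - 1) ≤ 1 := pow_le_one₀ h3.1.le h3.2.le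
  have hpow0 : (0:ℝ) ≤ δ ^ (t - 1) := pow_nonneg h3.1.le _
  nlinarith

lemma SHD_succ (T : ℕ) (β : ℕ → ℝ) (δ : ℝ) (t : ℕ) (h1 : 1 ≤ t) (h2 : t + 1 ≤ T) :
    SHD T β δ (t + 1) = β t * δ * SHD T β δ t := by
  obtain ⟨k, rfl⟩ : ∃ k, t = k + 1 := ⟨t - 1, by omega⟩
  unfold SHD
  rw [min_eq_left h2, min_eq_left (by omega)]
  simp only [Nat.add_sub_cancel]
  rw [Finset.prod_Icc_succ_top (by omega : 1 ≤ k + 1), pow_succ]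
  ring

lemma SHD_succT (T : ℕ) (hT : 1 ≤ T) (β : ℕ → ℝ) (δ : ℝ) :
    SHD T β δ (T + 1) = δ * SHD T β δ T := by
  obtain ⟨k, rfl⟩ : ∃ k, T = k + 1 := ⟨T - 1, by omega⟩
  unfold SHD
  rw [min_eq_right (by omega), min_self]
  simp only [Nat.add_sub_cancel]
  rw [pow_succ]
  ring

/-- Uniqueness of the SH(T) discounted expected utility
representation on `X^n`. -/
theorem sh_discounting_finite_unique {X : Type*} (M : MixtureSpace X)
    (T : ℕ) (hT : 1 ≤ T) (n : ℕ) (hn : T + 1 ≤ n)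
    (R : (Fin n → X) → (Fin n → X) → Prop)
    (u u' : X → ℝ) (β β' : ℕ → ℝ) (δ δ' : ℝ)
    (h : SHRep M R T β δ u) (h' : SHRep M R T β' δ' u') :
    (∃ A > (0:ℝ), ∃ B : ℝ, ∀ x : X, u x = A * u' x + B) ∧ δ = δ' ∧
    ∀ t : ℕ, 1 ≤ t → t ≤ T - 1 → β t = β' t := by
  obtain ⟨hu, ⟨a0, b0, hab0⟩, hpar, hrep⟩ := h
  obtain ⟨hu', -, hpar', hrep'⟩ := h'
  have hn0 : 0 < n := by omega
  have hDpos : ∀ t, 0 < SHD T β δ t := SHD_pos T β δ hpar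
  have hD'pos : ∀ t, 0 < SHD T β' δ' t := SHD_pos T β' δ' hpar'
  have hDle : ∀ t, SHD T β δ t ≤ 1 := SHD_le_one T β δ hpar
  have hD'le : ∀ t, SHD T β' δ' t ≤ 1 := SHD_le_one T β' δ' hpar'
  have hsumD : 0 < ∑ i : Fin n, SHD T β δ ((i:ℕ)+1) :=
    Finset.sum_pos (fun i _ => hDpos _) ⟨⟨0, hn0⟩, Finset.mem_univ _⟩
  have hsumD' : 0 < ∑ i : Fin n, SHD T β' δ' ((i:ℕ)+1) :=
    Finset.sum_pos (fun i _ => hD'pos _) ⟨⟨0, hn0⟩, Finset.mem_univ _⟩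
  -- constant streams are ranked by utility
  have hconst : ∀ c d : X, R (fun _ => c) (fun _ => d) ↔ u d ≤ u c := by
    intro c d
    rw [hrep]
    constructor
    · intro hcd
      have h1 : (∑ i : Fin n, SHD T β δ ((i:ℕ)+1)) * u d
          ≤ (∑ i : Fin n, SHD T β δ ((i:ℕ)+1)) * u c := by
        simpa [← Finset.sum_mul] using hcd
      exact le_of_mul_le_mul_left h1 hsumD
    · intro hdc
      exact Finset.sum_le_sum fun i _ => mul_le_mul_of_nonneg_left hdc (hDpos _).le
  have hconst' : ∀ c d : X, R (fun _ => c) (fun _ => d) ↔ u' d ≤ u' c := by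
    intro c d
    rw [hrep']
    constructor
    · intro hcd
      have h1 : (∑ i : Fin n, SHD T β' δ' ((i:ℕ)+1)) * u' d
          ≤ (∑ i : Fin n, SHD T β' δ' ((i:ℕ)+1)) * u' c := by
        simpa [← Finset.sum_mul] using hcd
      exact le_of_mul_le_mul_left h1 hsumD'
    · intro hdc
      exact Finset.sum_le_sum fun i _ => mul_le_mul_of_nonneg_left hdc (hD'pos _).le
  have hord : ∀ c d : X, u d ≤ u c ↔ u' d ≤ u' c :=
    fun c d => (hconst c d).symm.trans (hconst' c d)
  have hindiff : ∀ c d : X, u' c = u' d → u c = u d := by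
    intro c d hcd
    exact le_antisymm ((hord d c).mpr hcd.le) ((hord c d).mpr hcd.ge)
  obtain ⟨a, b, hab, hab'⟩ : ∃ a b : X, u b < u a ∧ u' b < u' a := by
    have cross : ∀ c d : X, u d < u c → u' d < u' c := by
      intro c d hdc
      by_contra hcon
      push_neg at hcon
      exact absurd ((hord d c).mpr hcon) (not_le.mpr hdc)
    rcases lt_or_gt_of_ne hab0 with hlt | hgt
    · exact ⟨b0, a0, hlt, cross _ _ hlt⟩
    · exact ⟨a0, b0, hgt, cross _ _ hgt⟩
  have hQ : 0 < u a - u b := sub_pos.mpr hab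
  have hP : 0 < u' a - u' b := sub_pos.mpr hab'
  have hPne : u' a - u' b ≠ 0 := ne_of_gt hP
  -- affine relation between u and u'
  have hAff : ∀ x : X, u x = (u a - u b) / (u' a - u' b) * u' x
      + (u b - (u a - u b) / (u' a - u' b) * u' b) := by
    intro x
    rcases le_or_gt (u' x) (u' a) with hxa | hxa
    · rcases le_or_gt (u' b) (u' x) with hbx | hbx
      · -- middle case
        have hl : (u' x - u' b) / (u' a - u' b) ∈ Set.Icc (0:ℝ) 1 :=
          ⟨div_nonneg (by linarith) hP.le, (div_le_one hP).mpr (by linarith)⟩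
        have h1 : u' (M.mix a ((u' x - u' b) / (u' a - u' b)) b) = u' x := by
          rw [hu' a b _ hl]
          field_simp
          ring
        have h2 := hindiff _ _ h1
        rw [hu a b _ hl] at h2
        rw [← h2]
        field_simp
        ring
      · -- u' x < u' b
        have hax : 0 < u' a - u' x := by linarith
        have hl : (u' b - u' x) / (u' a - u' x) ∈ Set.Icc (0:ℝ) 1 :=
          ⟨div_nonneg (by linarith) hax.le, (div_le_one hax).mpr (by linarith)⟩
        have h1 : u' (M.mix a ((u' b - u' x) / (u' a - u' x)) x) = u' b := by
          rw [hu' a x _ hl]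
          field_simp
          ring
        have h2 := hindiff _ _ h1
        rw [hu a x _ hl] at h2
        field_simp at h2 ⊢
        nlinarith [h2]
    · -- u' a < u' x
      have hxb : 0 < u' x - u' b := by linarith
      have hl : (u' a - u' b) / (u' x - u' b) ∈ Set.Icc (0:ℝ) 1 :=
        ⟨div_nonneg hP.le hxb.le, (div_le_one hxb).mpr (by linarith)⟩
      have h1 : u' (M.mix x ((u' a - u' b) / (u' x - u' b)) b) = u' a := by
        rw [hu' x b _ hl]
        field_simp
        ring
      have h2 := hindiff _ _ h1
      rw [hu x b _ hl] at h2
      field_simp at h2 ⊢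
      nlinarith [h2]
  -- equality of discount weights
  have hsum_upd : ∀ (w : Fin n → ℝ) (v : X → ℝ) (c : X) (s : Fin n),
      ∑ i : Fin n, w i * v (Function.update (fun _ => b) s c i)
        = (∑ i : Fin n, w i * v b) + w s * (v c - v b) := by
    intro w v c s
    have key : ∑ i : Fin n, (w i * v (Function.update (fun _ => b) s c i) - w i * v b)
        = w s * (v c - v b) := by
      rw [Finset.sum_eq_single s]
      · rw [Function.update_self]; ring
      · intro i _ his
        rw [Function.update_of_ne his]
        simp
      · intro hs; exact absurd (Finset.mem_univ s) hs
    rw [Finset.sum_sub_distrib] at key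
    linarith
  have hzD : ∀ (c : X) (s : Fin n),
      ∑ i : Fin n, SHD T β δ ((i:ℕ)+1) * u (Function.update (fun _ => b) s c i)
        = (∑ i : Fin n, SHD T β δ ((i:ℕ)+1) * u b) + SHD T β δ ((s:ℕ)+1) * (u c - u b) :=
    fun c s => hsum_upd _ u c s
  have hzD' : ∀ (c : X) (s : Fin n),
      ∑ i : Fin n, SHD T β' δ' ((i:ℕ)+1) * u' (Function.update (fun _ => b) s c i)
        = (∑ i : Fin n, SHD T β' δ' ((i:ℕ)+1) * u' b) + SHD T β' δ' ((s:ℕ)+1) * (u' c - u' b) :=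
    fun c s => hsum_upd _ u' c s
  have hDeq : ∀ s : Fin n, SHD T β δ ((s:ℕ)+1) = SHD T β' δ' ((s:ℕ)+1) := by
    intro s
    have h01 : SHD T β δ (((⟨0, hn0⟩ : Fin n) : ℕ) + 1) = 1 := SHD_one T hT β δ
    have h01' : SHD T β' δ' (((⟨0, hn0⟩ : Fin n) : ℕ) + 1) = 1 := SHD_one T hT β' δ'
    have hiff : ∀ l, l ∈ Set.Icc (0:ℝ) 1 →
        (SHD T β δ ((s:ℕ)+1) ≤ l ↔ SHD T β' δ' ((s:ℕ)+1) ≤ l) := by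
      intro l hl
      have hmix : u (M.mix a l b) = l * u a + (1 - l) * u b := hu a b l hl
      have hmix' : u' (M.mix a l b) = l * u' a + (1 - l) * u' b := hu' a b l hl
      have e1 : R (Function.update (fun _ => b) (⟨0, hn0⟩ : Fin n) (M.mix a l b))
          (Function.update (fun _ => b) s a) ↔ SHD T β δ ((s:ℕ)+1) ≤ l := by
        rw [hrep, hzD, hzD, h01, hmix]
        constructor
        · intro hge; nlinarith
        · intro hge; nlinarith
      have e2 : R (Function.update (fun _ => b) (⟨0, hn0⟩ : Fin n) (M.mix a l b))
          (Function.update (fun _ => b) s a) ↔ SHD T β' δ' ((s:ℕ)+1) ≤ l := by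
        rw [hrep', hzD', hzD', h01', hmix']
        constructor
        · intro hge; nlinarith
        · intro hge; nlinarith
      exact e1.symm.trans e2
    have k1 := (hiff _ ⟨(hDpos _).le, hDle _⟩).mp le_rfl
    have k2 := (hiff _ ⟨(hD'pos _).le, hD'le _⟩).mpr le_rfl
    exact le_antisymm k2 k1
  have hDeq_t : ∀ t : ℕ, 1 ≤ t → t ≤ n → SHD T β δ t = SHD T β' δ' t := by
    intro t h1 h2
    have hh := hDeq ⟨t - 1, by omega⟩
    simpa [Nat.sub_add_cancel h1] using hh
  have hδeq : δ = δ' := by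
    have h1 := hDeq_t (T + 1) (by omega) (by omega)
    have h2 := hDeq_t T hT (by omega)
    rw [SHD_succT T hT β δ, SHD_succT T hT β' δ', h2] at h1
    exact mul_right_cancel₀ (ne_of_gt (hD'pos T)) h1
  refine ⟨⟨(u a - u b) / (u' a - u' b), div_pos hQ hP,
    u b - (u a - u b) / (u' a - u' b) * u' b, hAff⟩, hδeq, ?_⟩
  intro t ht1 ht2
  have h1 := hDeq_t (t + 1) (by omega) (by omega)
  have h2 := hDeq_t t ht1 (by omega)
  rw [SHD_succ T β δ t ht1 (by omega), SHD_succ T β' δ' t ht1 (by omega), h2, hδeq] at h1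
  have h3 := mul_right_cancel₀ (ne_of_gt (hD'pos t)) h1
  have hδ'pos : 0 < δ' := hpar'.2.2.1
  exact mul_right_cancel₀ (ne_of_gt hδ'pos) h3
end

section
/- Let X be a mixture set and ≽ a binary relation on X^∞. Suppose (u, δ) and (u′, δ′) both satisfy: u (resp. u′) : X → ℝ is mixture linear and non-constant, δ, δ′ ∈ (0,1), the series ∑_{t=1}^∞ δ^{t−1}u(x_t) and ∑_{t=1}^∞ (δ′)^{t−1}u′(x_t) converge for every x ∈ X^∞, and each represents ≽ (x ≽ y iff the corresponding discounted sums are ordered ≥). Then there exist A > 0 and B ∈ ℝ with u = Au′ + B, and δ = δ′. -/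
/-!
Constant streams are ranked by `u` and by `u'` alike, so `u` and `u'` are ordinally equivalent
mixture-linear utilities, hence positive affine transforms of each other: if `u x` lies between
`u q` and `u p`, then `x` is `u`-indifferent, and therefore `u'`-indifferent, to a mixture of
`p` and `q` with the same weight, so the points `(u, u')` of any three outcomes are collinear.
For the discount factor, take `u b < u a`: the stream paying `a` in the second period and `b`
otherwise is weakly preferred to the one paying `a λ b` in the first period and `b` otherwise
exactly when `λ ≤ δ`, and likewise exactly when `λ ≤ δ'`.
-/

theorem exists_lt_of_exists_ne {α β : Type*} [LinearOrder β] {f : α → β}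
    (h : ∃ a b, f a ≠ f b) : ∃ a b, f b < f a := by
  obtain ⟨a, b, hab⟩ := h
  rcases hab.lt_or_gt with hlt | hlt
  exacts [⟨b, a, hlt⟩, ⟨a, b, hlt⟩]

namespace MixtureSpace

variable {X : Type*} {M : MixtureSpace X} {u u' : X → ℝ}

theorem linear.sub_mul_sub_eq_of_between (hu : M.linear u) (hu' : M.linear u')
    (hfib : ∀ p q, u p = u q → u' p = u' q) {p q x : X} (hqx : u q ≤ u x) (hxp : u x ≤ u p) :
    (u x - u q) * (u' p - u' q) = (u' x - u' q) * (u p - u q) := by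
  rcases (hqx.trans hxp).eq_or_lt with hqp | hqp
  · have hxq : u' x = u' q := hfib x q (by linarith)
    rw [hfib p q hqp.symm, hxq]
    ring
  · set l := (u x - u q) / (u p - u q)
    have hpq : 0 < u p - u q := sub_pos.2 hqp
    have hl : l ∈ Set.Icc (0:ℝ) 1 :=
      ⟨div_nonneg (by linarith) hpq.le, (div_le_one hpq).2 (by linarith)⟩
    have hlu : l * (u p - u q) = u x - u q := div_mul_cancel₀ _ hpq.ne'
    have hmix : u' (M.mix p l q) = u' x := hfib _ _ (by rw [hu p q l hl]; linear_combination hlu)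
    rw [hu' p q l hl] at hmix
    linear_combination (u p - u q) * hmix - (u' p - u' q) * hlu

theorem linear.exists_affine_of_le_iff (hu : M.linear u) (hu' : M.linear u')
    (hord : ∀ p q, u q ≤ u p ↔ u' q ≤ u' p) (hnc : ∃ a b, u a ≠ u b) :
    ∃ A > (0:ℝ), ∃ B : ℝ, ∀ x : X, u x = A * u' x + B := by
  have hfib : ∀ p q, u p = u q → u' p = u' q := fun p q hpq =>
    le_antisymm ((hord q p).1 hpq.le) ((hord p q).1 hpq.ge)
  obtain ⟨a, b, hba⟩ := exists_lt_of_exists_ne hnc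
  have hba' : u' b < u' a := lt_of_not_ge fun h => hba.not_ge ((hord b a).2 h)
  have hcol : ∀ x, (u x - u b) * (u' a - u' b) = (u' x - u' b) * (u a - u b) := by
    intro x
    rcases le_or_gt (u x) (u a) with hxa | hax
    · rcases le_or_gt (u b) (u x) with hbx | hxb
      · exact hu.sub_mul_sub_eq_of_between hu' hfib hbx hxa
      · linear_combination -hu.sub_mul_sub_eq_of_between hu' hfib hxb.le hba.le
    · linear_combination -hu.sub_mul_sub_eq_of_between hu' hfib hba.le hax.le
  refine ⟨(u a - u b) / (u' a - u' b), div_pos (by linarith) (by linarith),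
    u b - (u a - u b) / (u' a - u' b) * u' b, fun x => ?_⟩
  have hd' : u' a - u' b ≠ 0 := (sub_pos.2 hba').ne'
  field_simp
  linear_combination hcol x

end MixtureSpace

theorem bracket_self {X : Type*} (c : X) (k : ℕ) : bracket c c k = fun _ => c := by
  funext t
  simp [bracket]

theorem hasSum_pow_mul_bracket {X : Type*} (u : X → ℝ) {δ : ℝ} (hδ0 : 0 ≤ δ) (hδ1 : δ < 1)
    (c a : X) (k : ℕ) :
    HasSum (fun t => δ ^ t * u (bracket c a k t)) ((1 - δ)⁻¹ * u c + δ ^ k * (u a - u c)) := by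
  have hsplit : (fun t => δ ^ t * u (bracket c a k t)) =
      fun t => δ ^ t * u c + if t = k then δ ^ k * (u a - u c) else 0 := by
    funext t
    by_cases ht : t = k
    · subst ht; simp only [bracket, if_true]; ring
    · simp [bracket, ht]
  rw [hsplit]
  exact ((hasSum_geometric_of_lt_one hδ0 hδ1).mul_right (u c)).add (hasSum_ite_eq k _)

namespace ExpRepInf

variable {X : Type*} {M : MixtureSpace X} {R : (ℕ → X) → (ℕ → X) → Prop} {u u' : X → ℝ}
  {δ δ' : ℝ}

theorem rel_bracket_iff (h : ExpRepInf M R u δ) (c a d b : X) (i j : ℕ) :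
    R (bracket c a i) (bracket d b j) ↔
      (1 - δ)⁻¹ * u d + δ ^ j * (u b - u d) ≤ (1 - δ)⁻¹ * u c + δ ^ i * (u a - u c) := by
  obtain ⟨-, -, ⟨hδ0, hδ1⟩, U, hU, hrep⟩ := h
  have hval : ∀ c a k, U (bracket c a k) = (1 - δ)⁻¹ * u c + δ ^ k * (u a - u c) :=
    fun c a k => tendsto_nhds_unique (hU _)
      (hasSum_pow_mul_bracket u hδ0.le hδ1 c a k).tendsto_sum_nat
  rw [hrep, hval, hval, ge_iff_le]

theorem rel_const_iff (h : ExpRepInf M R u δ) (p q : X) :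
    R (fun _ => p) (fun _ => q) ↔ u q ≤ u p := by
  have hδ1 : 0 < (1 - δ)⁻¹ := inv_pos.2 (sub_pos.2 h.2.2.1.2)
  rw [← bracket_self p 0, ← bracket_self q 0, h.rel_bracket_iff]
  simp only [sub_self, mul_zero, add_zero]
  exact mul_le_mul_iff_of_pos_left hδ1

theorem rel_bracket_mix_iff (h : ExpRepInf M R u δ) {a b : X} (hba : u b < u a) {l : ℝ}
    (hl : l ∈ Set.Icc (0:ℝ) 1) :
    R (bracket b a 1) (bracket b (M.mix a l b) 0) ↔ l ≤ δ := by
  have hab : 0 < u a - u b := sub_pos.2 hba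
  rw [h.rel_bracket_iff, h.1 a b l hl, pow_zero, pow_one]
  exact ⟨fun hle => le_of_mul_le_mul_right (by linarith) hab,
    fun hle => by linarith [mul_le_mul_of_nonneg_right hle hab.le]⟩

theorem le_iff_le (h : ExpRepInf M R u δ) (h' : ExpRepInf M R u' δ') (p q : X) :
    u q ≤ u p ↔ u' q ≤ u' p :=
  (h.rel_const_iff p q).symm.trans (h'.rel_const_iff p q)

theorem discount_eq (h : ExpRepInf M R u δ) (h' : ExpRepInf M R u' δ') : δ = δ' := by
  obtain ⟨a, b, hba⟩ := exists_lt_of_exists_ne h.2.1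
  have hba' : u' b < u' a := lt_of_not_ge fun hab => hba.not_ge ((h.le_iff_le h' b a).2 hab)
  have key : ∀ l ∈ Set.Icc (0:ℝ) 1, l ≤ δ ↔ l ≤ δ' := fun l hl =>
    (h.rel_bracket_mix_iff hba hl).symm.trans (h'.rel_bracket_mix_iff hba' hl)
  obtain ⟨-, -, ⟨hδ0, hδ1⟩, -⟩ := h
  obtain ⟨-, -, ⟨hδ0', hδ1'⟩, -⟩ := h'
  exact le_antisymm ((key δ ⟨hδ0.le, hδ1.le⟩).1 le_rfl) ((key δ' ⟨hδ0'.le, hδ1'.le⟩).2 le_rfl)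

end ExpRepInf

/-- Uniqueness of the exponentially discounted expected utility
representation on `X^∞`. -/
theorem exp_discounting_infinite_unique {X : Type*} (M : MixtureSpace X)
    (R : (ℕ → X) → (ℕ → X) → Prop) (u u' : X → ℝ) (δ δ' : ℝ)
    (h : ExpRepInf M R u δ) (h' : ExpRepInf M R u' δ') :
    (∃ A > (0:ℝ), ∃ B : ℝ, ∀ x : X, u x = A * u' x + B) ∧ δ = δ' :=
  ⟨h.1.exists_affine_of_le_iff h'.1 (h.le_iff_le h') h.2.1, h.discount_eq h'⟩
end

section
/- Let X be a mixture set, u : X → ℝ mixture linear and non-constant, n ≥ 3 a finite integer, and w ∈ ℝ^n with w_s > 0 for every s. Define ≽ on X^n by: x ≽ y iff ∑_{s=1}^n w_s u(x_s) ≥ ∑_{s=1}^n w_s u(y_s). Fix t with 2 ≤ t ≤ n − 1. Suppose the early-bias condition holds at period t: for all a, b, c, d ∈ X with a ≻ c and b ≺ d (in the induced relation) and every x ∈ X^n, if (x₁,…,x_{t−1},a,b,x_{t+2},…,xₙ) ∼ (x₁,…,x_{t−1},c,d,x_{t+2},…,xₙ) then (x₁,…,x_{t−2},a,b,x_{t+2},…,xₙ,x_{t−1})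 ≽ (x₁,…,x_{t−2},c,d,x_{t+2},…,xₙ,x_{t−1}). Then w_t / w_{t−1} ≤ w_{t+1} / w_t, i.e., w_t² ≤ w_{t−1} w_{t+1}. -/
/-
Fix outcomes `q ≺ p` and let `δ = (u p − u q) / (w_t + w_{t+1})`. By mixing `p` and `q`, pick
`a, d` with `u a − u q = w_{t+1} δ` and `u d − u q = w_t δ`. Then `(…, a, q, …) ∼ (…, q, d, …)` at
periods `t, t+1` (both gains are `w_t w_{t+1} δ`), while `a ≻ q ≺ d`. Early bias moves the pair
to periods `t−1, t`, where the comparison reads `w_{t−1} w_{t+1} δ ≥ w_t² δ`.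
-/

theorem MixtureSpace.linear.exists_apply_eq {X : Type*} {M : MixtureSpace X} {u : X → ℝ}
    (hu : M.linear u) {p q : X} {r : ℝ} (hr : r ∈ Set.Icc (u q) (u p)) : ∃ a, u a = r := by
  rcases hr.1.eq_or_lt with hqr | hqr
  · exact ⟨q, hqr⟩
  have hqp : 0 < u p - u q := by linarith [hr.2]
  set l := (r - u q) / (u p - u q)
  have hl : l ∈ Set.Icc (0 : ℝ) 1 :=
    ⟨div_nonneg (by linarith) hqp.le, (div_le_one hqp).2 (by linarith [hr.2])⟩
  have hlr : l * (u p - u q) = r - u q := div_mul_cancel₀ _ hqp.ne'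
  exact ⟨M.mix p l q, by rw [hu p q l hl]; linarith⟩

theorem sum_mul_sub_sum_mul_of_eq_off_pair {ι X : Type*} [Fintype ι] (w : ι → ℝ) (u : X → ℝ)
    {x y : ι → X} {j k : ι} (hjk : j ≠ k) (hxy : ∀ s, s ≠ j → s ≠ k → x s = y s) :
    ∑ s, w s * u (x s) - ∑ s, w s * u (y s) =
      w j * (u (x j) - u (y j)) + w k * (u (x k) - u (y k)) := by
  rw [← Finset.sum_sub_distrib, Fintype.sum_eq_add j k hjk fun s hs => by
    rw [hxy s hs.1 hs.2, sub_self]]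
  ring

theorem strictP_const_of_lt {ι X : Type*} [Fintype ι] [Nonempty ι] {w : ι → ℝ}
    (hw : ∀ s, 0 < w s) {u : X → ℝ} {R : (ι → X) → (ι → X) → Prop}
    (hR : ∀ x y : ι → X, R x y ↔ (∑ s, w s * u (x s)) ≥ ∑ s, w s * u (y s))
    {y z : X} (hzy : u z < u y) : strictP R (fun _ => y) (fun _ => z) := by
  have hsum : ∀ v : X, ∑ s, w s * u v = (∑ s, w s) * u v := fun v => (Finset.sum_mul ..).symm
  have hW : 0 < ∑ s, w s := Finset.sum_pos (fun s _ => hw s) Finset.univ_nonempty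
  simp only [strictP, hR, hsum, ge_iff_le, not_le]
  exact ⟨by gcongr, by gcongr⟩

theorem sum_mul_update_update_sub {ι X : Type*} [Fintype ι] [DecidableEq ι] (w : ι → ℝ)
    (u : X → ℝ) (x : ι → X) {k m : ι} (hkm : k ≠ m) (a b c d : X) :
    ∑ s, w s * u (Function.update (Function.update x k a) m b s) -
        ∑ s, w s * u (Function.update (Function.update x k c) m d s) =
      w k * (u a - u c) + w m * (u b - u d) := by
  rw [sum_mul_sub_sum_mul_of_eq_off_pair w u hkm fun s hsk hsm => by
    simp only [Function.update_of_ne hsm, Function.update_of_ne hsk]]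
  simp only [Function.update_self, Function.update_of_ne hkm]

theorem sum_mul_ebShiftFin_sub {X : Type*} {n : ℕ} (w : Fin n → ℝ) (u : X → ℝ) (x : Fin n → X)
    {i : ℕ} (hi1 : 1 ≤ i) (hin : i < n) (a b c d : X) :
    ∑ s, w s * u (ebShiftFin x i (by omega) a b s) -
        ∑ s, w s * u (ebShiftFin x i (by omega) c d s) =
      w ⟨i - 1, by omega⟩ * (u a - u c) + w ⟨i, hin⟩ * (u b - u d) := by
  rw [sum_mul_sub_sum_mul_of_eq_off_pair w u (j := ⟨i - 1, by omega⟩) (k := ⟨i, hin⟩)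
    (by simp [Fin.ext_iff]; omega) fun s hs1 hs2 => by
      simp only [ebShiftFin, if_neg (Fin.val_ne_of_ne hs1), if_neg (Fin.val_ne_of_ne hs2)]]
  simp [ebShiftFin, show ¬ i < i - 1 ∧ i ≠ i - 1 by omega]

/-- `i` is the 0-based index of period `t`, so `i - 1, i, i + 1` are periods `t − 1, t, t + 1`. -/
theorem early_bias_weight_ineq {X : Type*} (M : MixtureSpace X) (u : X → ℝ)
    (hu : M.linear u) (hnc : ∃ a b : X, u a ≠ u b)
    (n : ℕ) (w : Fin n → ℝ) (hw : ∀ s, 0 < w s)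
    (R : (Fin n → X) → (Fin n → X) → Prop)
    (hR : ∀ x y : Fin n → X,
      R x y ↔ (∑ s, w s * u (x s)) ≥ ∑ s, w s * u (y s))
    (i : ℕ) (hi1 : 1 ≤ i) (hi2 : i ≤ n - 2)
    (hEB : ∀ a b c d : X,
      strictP R (fun _ => a) (fun _ => c) → strictP R (fun _ => d) (fun _ => b) →
      ∀ x : Fin n → X,
        (R (Function.update (Function.update x ⟨i, by omega⟩ a) ⟨i+1, by omega⟩ b)
           (Function.update (Function.update x ⟨i, by omega⟩ c) ⟨i+1, by omega⟩ d) ∧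
         R (Function.update (Function.update x ⟨i, by omega⟩ c) ⟨i+1, by omega⟩ d)
           (Function.update (Function.update x ⟨i, by omega⟩ a) ⟨i+1, by omega⟩ b)) →
        R (ebShiftFin x i (by omega) a b) (ebShiftFin x i (by omega) c d)) :
    (w ⟨i, by omega⟩) ^ 2 ≤ w ⟨i - 1, by omega⟩ * w ⟨i + 1, by omega⟩ := by
  obtain ⟨p, q, hqp⟩ : ∃ p q : X, u q < u p := by
    obtain ⟨p, q, h⟩ := hnc
    exact h.lt_or_gt.elim (fun h => ⟨q, p, h⟩) (fun h => ⟨p, q, h⟩)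
  set k : Fin n := ⟨i, by omega⟩
  set m : Fin n := ⟨i + 1, by omega⟩
  have : Nonempty (Fin n) := ⟨k⟩
  have hk := hw k
  have hm := hw m
  set δ := (u p - u q) / (w k + w m)
  have hδ : 0 < δ := div_pos (by linarith) (by linarith)
  have hδD : (w k + w m) * δ = u p - u q := mul_div_cancel₀ _ (by linarith)
  obtain ⟨a, ha⟩ : ∃ a, u a = u q + w m * δ :=
    hu.exists_apply_eq (p := p) (q := q) ⟨by nlinarith, by nlinarith⟩
  obtain ⟨d, hd⟩ : ∃ d, u d = u q + w k * δ :=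
    hu.exists_apply_eq (p := p) (q := q) ⟨by nlinarith, by nlinarith⟩
  have hindiff := sum_mul_update_update_sub w u (fun _ => q) (k := k) (m := m)
    (by simp [k, m, Fin.ext_iff]) a q q d
  have hshift := (hR _ _).1 <| hEB a q q d (strictP_const_of_lt hw hR (by nlinarith))
    (strictP_const_of_lt hw hR (by nlinarith)) (fun _ => q)
    ⟨(hR _ _).2 (by nlinarith), (hR _ _).2 (by nlinarith)⟩
  have hshift_sub := sum_mul_ebShiftFin_sub w u (fun _ => q) hi1 k.isLt a q q d
  have hδ_mul : w k * w k * δ ≤ w ⟨i - 1, by omega⟩ * w m * δ := by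
    rw [ha, hd] at hshift_sub
    linarith
  rw [pow_two]
  exact le_of_mul_le_mul_right hδ_mul hδ
end

section
/- Let X be a mixture set, u : X → ℝ mixture linear and non-constant, n ≥ 2 a finite integer, and w ∈ ℝ^n with w_t > 0 for every t. Suppose the binary relation ≽′ on X^{n−1} defined by x ≽′ y iff ∑_{t=1}^{n−1} w_{t+1} u(x_t) ≥ ∑_{t=1}^{n−1} w_{t+1} u(y_t) coincides with the binary relation ≽″ on X^{n−1} defined by x ≽″ y iff ∑_{t=1}^{n−1} w_t u(x_t) ≥ ∑_{t=1}^{n−1} w_t u(y_t). Then there exists δ > 0 such that w_{t+1} = δ w_t for all t = 1,…,n−1; consequently w_t = δ^{t−1} w₁ for all t. -/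
lemma sum_ite_util {m : ℕ} (v : Fin m → ℝ) (t0 : Fin m) (A B : ℝ) :
    ∑ s, v s * (if s = t0 then A else B) = (∑ s, v s) * B + v t0 * (A - B) := by
  have e : ∀ s : Fin m, v s * (if s = t0 then A else B)
      = v s * B + (if s = t0 then v s * (A - B) else 0) := by
    intro s; split_ifs <;> ring
  simp_rw [e, Finset.sum_add_distrib, Finset.sum_ite_eq' Finset.univ, Finset.mem_univ,
    if_true, Finset.sum_mul]

lemma cross_eq {X : Type*} (M : MixtureSpace X) (u : X → ℝ) (hu : M.linear u)
    (a b : X) (hba : u b < u a) (m : ℕ) (hm : 0 < m)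
    (v v' : Fin m → ℝ) (hv : ∀ t, 0 < v t) (hv' : ∀ t, 0 < v' t)
    (h : ∀ x y : Fin m → X,
      ((∑ t, v t * u (x t)) ≥ ∑ t, v t * u (y t)) ↔
      ((∑ t, v' t * u (x t)) ≥ ∑ t, v' t * u (y t)))
    (t0 : Fin m) :
    v t0 * (∑ t, v' t) = v' t0 * (∑ t, v t) := by
  have hne : Nonempty (Fin m) := ⟨⟨0, hm⟩⟩
  set S := ∑ t, v t with hSdef
  set S' := ∑ t, v' t with hS'def
  have hS : 0 < S := Finset.sum_pos (fun t _ => hv t) Finset.univ_nonempty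
  have hS' : 0 < S' := Finset.sum_pos (fun t _ => hv' t) Finset.univ_nonempty
  have hvS : v t0 ≤ S := Finset.single_le_sum (fun t _ => (hv t).le) (Finset.mem_univ t0)
  have hv'S' : v' t0 ≤ S' := Finset.single_le_sum (fun t _ => (hv' t).le) (Finset.mem_univ t0)
  have hc : 0 < u a - u b := sub_pos.mpr hba
  have key : ∀ μ ∈ Set.Icc (0:ℝ) 1, (v t0 ≥ S * μ ↔ v' t0 ≥ S' * μ) := by
    intro μ hμ
    have hmix : u (M.mix a μ b) = μ * u a + (1 - μ) * u b := hu a b μ hμ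
    have h1 := h (fun s => if s = t0 then a else b) (fun _ => M.mix a μ b)
    simp only [apply_ite u, hmix] at h1
    rw [sum_ite_util v, sum_ite_util v', ← Finset.sum_mul, ← Finset.sum_mul,
      ← hSdef, ← hS'def] at h1
    have e1 : (S * u b + v t0 * (u a - u b) ≥ S * (μ * u a + (1-μ) * u b)) ↔
        v t0 ≥ S * μ := by
      constructor
      · intro hh
        have h2 : S * μ * (u a - u b) ≤ v t0 * (u a - u b) := by nlinarith
        exact le_of_mul_le_mul_right h2 hc
      · intro hh; nlinarith
    have e2 : (S' * u b + v' t0 * (u a - u b) ≥ S' * (μ * u a + (1-μ) * u b)) ↔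
        v' t0 ≥ S' * μ := by
      constructor
      · intro hh
        have h2 : S' * μ * (u a - u b) ≤ v' t0 * (u a - u b) := by nlinarith
        exact le_of_mul_le_mul_right h2 hc
      · intro hh; nlinarith
    exact e1.symm.trans (h1.trans e2)
  have hμ1 : v t0 / S ∈ Set.Icc (0:ℝ) 1 :=
    ⟨div_nonneg (hv t0).le hS.le, (div_le_one hS).mpr hvS⟩
  have hμ2 : v' t0 / S' ∈ Set.Icc (0:ℝ) 1 :=
    ⟨div_nonneg (hv' t0).le hS'.le, (div_le_one hS').mpr hv'S'⟩
  have k1 : v' t0 ≥ S' * (v t0 / S) := (key _ hμ1).mp (le_of_eq (by field_simp))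
  have k2 : v t0 ≥ S * (v' t0 / S') := (key _ hμ2).mpr (le_of_eq (by field_simp))
  have k1' : S' * v t0 ≤ v' t0 * S := by
    have h3 := mul_le_mul_of_nonneg_right k1 hS.le
    calc S' * v t0 = S' * (v t0 / S) * S := by field_simp
    _ ≤ v' t0 * S := h3
  have k2' : S * v' t0 ≤ v t0 * S' := by
    have h3 := mul_le_mul_of_nonneg_right k2 hS'.le
    calc S * v' t0 = S * (v' t0 / S') * S' := by field_simp
    _ ≤ v t0 * S' := h3
  linarith

/-- If the order on `X^{n−1}` represented by the shifted weights
`(w₂, …, wₙ)` coincides with the order represented by `(w₁, …, w_{n−1})`, then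
the weights are geometric: `w_{t+1} = δ w_t` for some `δ > 0`, so `w_t = δ^{t−1} w₁`. -/
theorem stationarity_geometric_weights {X : Type*} (M : MixtureSpace X) (u : X → ℝ)
    (hu : M.linear u) (hnc : ∃ a b : X, u a ≠ u b)
    (n : ℕ) (hn : 2 ≤ n) (w : Fin n → ℝ) (hw : ∀ t, 0 < w t)
    (h : ∀ x y : Fin (n-1) → X,
      ((∑ t : Fin (n-1), w ⟨(t : ℕ) + 1, by have := t.isLt; omega⟩ * u (x t)) ≥
        ∑ t : Fin (n-1), w ⟨(t : ℕ) + 1, by have := t.isLt; omega⟩ * u (y t)) ↔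
      ((∑ t : Fin (n-1), w ⟨(t : ℕ), by have := t.isLt; omega⟩ * u (x t)) ≥
        ∑ t : Fin (n-1), w ⟨(t : ℕ), by have := t.isLt; omega⟩ * u (y t))) :
    ∃ δ > (0:ℝ),
      (∀ t : ℕ, ∀ ht : t + 1 < n, w ⟨t + 1, ht⟩ = δ * w ⟨t, by omega⟩) ∧
      ∀ t : Fin n, w t = δ ^ (t : ℕ) * w ⟨0, by omega⟩ := by
  obtain ⟨a, b, hba⟩ : ∃ a b : X, u b < u a := by
    obtain ⟨a, b, hab⟩ := hnc
    rcases hab.lt_or_gt with h' | h'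
    · exact ⟨b, a, h'⟩
    · exact ⟨a, b, h'⟩
  have hm : 0 < n - 1 := by omega
  set v : Fin (n-1) → ℝ := fun t => w ⟨(t : ℕ) + 1, by have := t.isLt; omega⟩ with hvdef
  set v' : Fin (n-1) → ℝ := fun t => w ⟨(t : ℕ), by have := t.isLt; omega⟩ with hv'def
  have hv : ∀ t, 0 < v t := fun t => hw _
  have hv' : ∀ t, 0 < v' t := fun t => hw _
  have hcross := cross_eq M u hu a b hba (n-1) hm v v' hv hv' h
  have hne : Nonempty (Fin (n-1)) := ⟨⟨0, hm⟩⟩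
  set S := ∑ t, v t with hSdef
  set S' := ∑ t, v' t with hS'def
  have hS : 0 < S := Finset.sum_pos (fun t _ => hv t) Finset.univ_nonempty
  have hS' : 0 < S' := Finset.sum_pos (fun t _ => hv' t) Finset.univ_nonempty
  refine ⟨S / S', div_pos hS hS', ?_, ?_⟩
  · intro t ht
    have := hcross ⟨t, by omega⟩
    have hw1 : v ⟨t, by omega⟩ = w ⟨t + 1, ht⟩ := rfl
    have hw2 : v' ⟨t, by omega⟩ = w ⟨t, by omega⟩ := rfl
    rw [hw1, hw2] at this
    field_simp
    linarith
  · have main : ∀ k, ∀ hk : k < n, w ⟨k, hk⟩ = (S / S') ^ k * w ⟨0, by omega⟩ := by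
      intro k
      induction k with
      | zero => intro hk; simp
      | succ k ih =>
        intro hk
        have hk' : k + 1 < n := hk
        have := hcross ⟨k, by omega⟩
        have hw1 : v ⟨k, by omega⟩ = w ⟨k + 1, hk'⟩ := rfl
        have hw2 : v' ⟨k, by omega⟩ = w ⟨k, by omega⟩ := rfl
        rw [hw1, hw2] at this
        have hstep : w ⟨k + 1, hk'⟩ = (S / S') * w ⟨k, by omega⟩ := by
          field_simp; linarith
        rw [hstep, ih (by omega), pow_succ]; ring
    intro t
    have := main t t.isLt
    simpa using this
end
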